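/- arXiv:2006.02643 — 4 statements merged into one kernel-verified Lean document; each statement's English description precedes it below -/
import Mathlib

section
/- For any positive integer m, nonnegative integers N_1,...,N_m with sum N, and any probability vector (θ_1,...,θ_m), the multinomial probability of counts (N_1,...,N_m) in N draws is at least the multinomial probability of counts (2N_1,...,2N_m) in 2N draws; that is, (N choose N_1,...,N_m)·θ_1^{N_1}···θ_m^{N_m} ≥ (2N choose 2N_1,...,2N_m)·θ_1^{2N_1}···θ_m^{2N_m}. -/
open Finset Nat

-- factorial log-concavity: if i + j = 2K then K!·K! ≤ i!·j!
lemma fact_sq_le_fact_mul_fact {i j K : ℕ} (hij : i + j = 2 * K) :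
    K ! * K ! ≤ i ! * j ! := by
  have hiK : i ≤ 2 * K := by omega
  have hmid : Nat.choose (2*K) i ≤ Nat.choose (2*K) K := by
    have h := Nat.choose_le_middle i (2*K)
    have : (2*K)/2 = K := by omega
    rwa [this] at h
  have e1 : Nat.choose (2*K) i * i ! * j ! = (2*K)! := by
    have := Nat.choose_mul_factorial_mul_factorial hiK
    have hj : 2*K - i = j := by omega
    rwa [hj] at this
  have e2 : Nat.choose (2*K) K * K ! * K ! = (2*K)! := by
    have := Nat.choose_mul_factorial_mul_factorial (show K ≤ 2*K by omega)
    have hK : 2*K - K = K := by omega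
    rwa [hK] at this
  have hpos : 0 < Nat.choose (2*K) K := Nat.choose_pos (by omega)
  have key : Nat.choose (2*K) K * (K ! * K !) ≤ Nat.choose (2*K) K * (i ! * j !) := by
    calc Nat.choose (2*K) K * (K ! * K !) = (2*K)! := by rw [← e2]; ring
    _ = Nat.choose (2*K) i * (i ! * j !) := by rw [← e1]; ring
    _ ≤ Nat.choose (2*K) K * (i ! * j !) := Nat.mul_le_mul_right _ hmid
  exact Nat.le_of_mul_le_mul_left key hpos

-- binomial log-concavity along a row
lemma choose_mul_choose_le {N i j K : ℕ} (hij : i + j = 2 * K)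
    (hi : i ≤ N) (hj : j ≤ N) :
    N.choose i * N.choose j ≤ N.choose K * N.choose K := by
  have hK : K ≤ N := by omega
  have A : K ! * K ! ≤ i ! * j ! := fact_sq_le_fact_mul_fact hij
  have B : (N - K)! * (N - K)! ≤ (N - i)! * (N - j)! :=
    fact_sq_le_fact_mul_fact (by omega)
  have e1 : N.choose i * i ! * (N - i)! = N ! := Nat.choose_mul_factorial_mul_factorial hi
  have e2 : N.choose j * j ! * (N - j)! = N ! := Nat.choose_mul_factorial_mul_factorial hj
  have e3 : N.choose K * K ! * (N - K)! = N ! := Nat.choose_mul_factorial_mul_factorial hK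
  have hpos : 0 < (K ! * (N - K)!) * (K ! * (N - K)!) := by positivity
  refine Nat.le_of_mul_le_mul_right ?_ hpos
  calc N.choose i * N.choose j * ((K ! * (N-K)!) * (K ! * (N-K)!))
      = (N.choose i * N.choose j) * ((K ! * K !) * ((N-K)! * (N-K)!)) := by ring
    _ ≤ (N.choose i * N.choose j) * ((i ! * j !) * ((N-i)! * (N-j)!)) := by
        exact Nat.mul_le_mul_left _ (Nat.mul_le_mul A B)
    _ = (N.choose i * i ! * (N-i)!) * (N.choose j * j ! * (N-j)!) := by ring
    _ = N ! * N ! := by rw [e1, e2]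
    _ = (N.choose K * K ! * (N-K)!) * (N.choose K * K ! * (N-K)!) := by rw [e3]
    _ = N.choose K * N.choose K * ((K ! * (N-K)!) * (K ! * (N-K)!)) := by ring

-- AM-GM style: x*y ≤ c^2 → x*y ≤ c*(x+y)/2
lemma mul_le_of_sq {x y c : ℝ} (hx : 0 ≤ x) (hy : 0 ≤ y) (hc : 0 ≤ c)
    (h : x * y ≤ c ^ 2) : x * y ≤ c * (x + y) / 2 := by
  nlinarith [mul_nonneg (mul_nonneg hx hy) (sq_nonneg (x - y)), sq_nonneg (x + y),
    mul_nonneg hx hy, mul_nonneg hc (add_nonneg hx hy), sq_nonneg (x*y - c*(x+y)/2)]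

lemma binom_double_le (K L : ℕ) (p q : ℝ) (hp : 0 ≤ p) (hq : 0 ≤ q) (hpq : p + q = 1) :
    ((2*(K+L)).choose (2*K) : ℝ) * p^(2*K) * q^(2*L)
      ≤ ((K+L).choose K : ℝ) * p^K * q^L := by
  set N := K + L with hN
  set b : ℕ → ℝ := fun i => (N.choose i : ℝ) * p^i * q^(N - i) with hb
  set c : ℝ := (N.choose K : ℝ) * p^K * q^L with hc
  have hc0 : 0 ≤ c := by rw [hc]; positivity
  have hb0 : ∀ i, 0 ≤ b i := fun i => by rw [hb]; positivity
  -- Vandermonde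
  have hV : ((2*N).choose (2*K) : ℕ)
      = ∑ i ∈ range (2*K+1), N.choose i * N.choose (2*K - i) := by
    have h := Nat.add_choose_eq N N (2*K)
    rw [Finset.Nat.sum_antidiagonal_eq_sum_range_succ_mk] at h
    have h2 : 2*N = N + N := by omega
    rw [h2, h]
  -- binomial theorem: sum over any big range is 1
  have hsum : ∀ M, N < M → ∑ i ∈ range M, b i = 1 := by
    intro M hM
    have h1 : ∑ i ∈ range (N+1), b i = 1 := by
      have h2 := add_pow p q N
      rw [hpq, one_pow] at h2
      rw [hb]
      rw [h2]
      refine Finset.sum_congr rfl fun i _ => by ring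
    rw [← h1]
    symm
    refine Finset.sum_subset (by intro x hx; simp at hx ⊢; omega) ?_
    intro x _ hx
    simp only [mem_range, not_lt] at hx
    have : N.choose x = 0 := Nat.choose_eq_zero_of_lt (by omega)
    simp [hb, this]
  -- termwise bound
  have hterm : ∀ i ∈ range (2*K+1),
      ((N.choose i : ℝ) * (N.choose (2*K-i)) ) * (p^(2*K) * q^(2*L))
        ≤ c * (b i + b (2*K-i)) / 2 := by
    intro i hi
    simp only [mem_range] at hi
    set j := 2*K - i with hj
    have hij : i + j = 2*K := by omega
    by_cases hiN : i ≤ N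
    · by_cases hjN : j ≤ N
      · have hbb : b i * b j = ((N.choose i : ℝ) * (N.choose j)) * (p^(2*K) * q^(2*L)) := by
          rw [hb]
          have hpp : p^i * p^j = p^(2*K) := by rw [← pow_add, hij]
          have hqq : q^(N-i) * q^(N-j) = q^(2*L) := by
            rw [← pow_add]
            congr 1
            omega
          calc (N.choose i : ℝ) * p^i * q^(N-i) * ((N.choose j : ℝ) * p^j * q^(N-j))
              = ((N.choose i : ℝ) * (N.choose j)) * ((p^i * p^j) * (q^(N-i) * q^(N-j))) := by ring
            _ = _ := by rw [hpp, hqq]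
        have hcc : b i * b j ≤ c^2 := by
          rw [hbb, hc]
          have hch : (N.choose i : ℝ) * (N.choose j) ≤ (N.choose K : ℝ) * (N.choose K) := by
            exact_mod_cast Nat.cast_le.mpr (choose_mul_choose_le hij hiN hjN)
          have hL : N - K = L := by omega
          calc ((N.choose i : ℝ) * (N.choose j)) * (p^(2*K) * q^(2*L))
              ≤ ((N.choose K : ℝ) * (N.choose K)) * (p^(2*K) * q^(2*L)) := by
                apply mul_le_mul_of_nonneg_right hch (by positivity)
            _ = ((N.choose K : ℝ) * p^K * q^L)^2 := by ring
        rw [← hbb]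
        exact mul_le_of_sq (hb0 i) (hb0 j) hc0 hcc
      · have : N.choose j = 0 := Nat.choose_eq_zero_of_lt (by omega)
        rw [this]
        push_cast
        rw [mul_zero, zero_mul]
        have : 0 ≤ c * (b i + b j) / 2 := by positivity
        linarith [this, hb0 i, hb0 j]
    · have : N.choose i = 0 := Nat.choose_eq_zero_of_lt (by omega)
      rw [this]
      push_cast
      rw [zero_mul, zero_mul]
      have : 0 ≤ c * (b i + b j) / 2 := by positivity
      linarith [this, hb0 i, hb0 j]
  -- assemble
  have hrefl : ∑ i ∈ range (2*K+1), b (2*K-i) = ∑ i ∈ range (2*K+1), b i := by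
    have h := Finset.sum_range_reflect b (2*K+1)
    simpa using h
  have hS1 : ∑ i ∈ range (2*K+1), b i ≤ 1 := by
    rw [← hsum (2*K+N+1) (by omega)]
    refine Finset.sum_le_sum_of_subset_of_nonneg ?_ (fun i _ _ => hb0 i)
    intro x hx
    simp only [mem_range] at hx ⊢
    omega
  calc ((2*N).choose (2*K) : ℝ) * p^(2*K) * q^(2*L)
      = ∑ i ∈ range (2*K+1), ((N.choose i : ℝ) * (N.choose (2*K-i))) * (p^(2*K) * q^(2*L)) := by
        rw [hV]
        push_cast
        rw [Finset.sum_mul, Finset.sum_mul]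
        refine Finset.sum_congr rfl fun i _ => by ring
    _ ≤ ∑ i ∈ range (2*K+1), c * (b i + b (2*K-i)) / 2 := Finset.sum_le_sum hterm
    _ = c/2 * ((∑ i ∈ range (2*K+1), b i) + (∑ i ∈ range (2*K+1), b (2*K-i))) := by
        rw [Finset.sum_congr rfl (fun i _ => by ring :
          ∀ i ∈ range (2*K+1), c * (b i + b (2*K-i)) / 2 = c/2 * (b i + b (2*K-i))),
          ← Finset.mul_sum, Finset.sum_add_distrib]
    _ = c * (∑ i ∈ range (2*K+1), b i) := by rw [hrefl]; ring
    _ ≤ c * 1 := mul_le_mul_of_nonneg_left hS1 hc0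
    _ = c := mul_one c

lemma multinomial_double_le_aux {ι : Type*} [DecidableEq ι] (s : Finset ι) :
    ∀ (Nc : ι → ℕ) (θ : ι → ℝ), (∀ i ∈ s, 0 ≤ θ i) → (∑ i ∈ s, θ i = 1) →
    (Nat.multinomial s (fun i => 2 * Nc i) : ℝ) * ∏ i ∈ s, θ i ^ (2 * Nc i)
      ≤ (Nat.multinomial s Nc : ℝ) * ∏ i ∈ s, θ i ^ (Nc i) := by
  induction s using Finset.induction_on with
  | empty => intro Nc θ _ _; simp
  | @insert j s' hj ih =>
    intro Nc θ hθ0 hθ1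
    rw [Finset.sum_insert hj] at hθ1
    have hpj : 0 ≤ θ j := hθ0 j (mem_insert_self _ _)
    have ht0 : 0 ≤ ∑ i ∈ s', θ i :=
      Finset.sum_nonneg fun i hi => hθ0 i (mem_insert_of_mem hi)
    set t := ∑ i ∈ s', θ i with ht
    set K := Nc j with hK
    set L := ∑ i ∈ s', Nc i with hL
    have h2L : ∑ i ∈ s', 2 * Nc i = 2 * L := by rw [hL, Finset.mul_sum]
    rw [Nat.multinomial_insert hj, Nat.multinomial_insert hj,
      Finset.prod_insert hj, Finset.prod_insert hj]
    simp only [h2L]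
    -- goal now involves (2*K + 2*L).choose (2*K) etc (after beta)
    rcases eq_or_lt_of_le ht0 with ht0' | ht0'
    · -- t = 0 : all θ i = 0 on s', θ j = 1
      have hall : ∀ i ∈ s', θ i = 0 := by
        intro i hi
        have := (Finset.sum_eq_zero_iff_of_nonneg
          (fun i hi => hθ0 i (mem_insert_of_mem hi))).mp ht0'.symm
        exact this i hi
      have hθj : θ j = 1 := by linarith
      by_cases hex : ∃ i ∈ s', Nc i ≠ 0
      · obtain ⟨i, hi, hNi⟩ := hex
        have hz : ∏ i ∈ s', θ i ^ (2 * Nc i) = 0 :=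
          Finset.prod_eq_zero hi (by rw [hall i hi]; exact zero_pow (by omega))
        rw [hz, mul_zero, mul_zero]
        have h1 : (0:ℝ) ≤ ((K + L).choose K * Nat.multinomial s' Nc : ℕ) := by positivity
        have h2 : (0:ℝ) ≤ θ j ^ K * ∏ i ∈ s', θ i ^ Nc i := by
          apply mul_nonneg (pow_nonneg hpj _)
          exact Finset.prod_nonneg fun i hi => pow_nonneg (hθ0 i (mem_insert_of_mem hi)) _
        positivity
      · push_neg at hex
        have hL0 : L = 0 := by rw [hL]; exact Finset.sum_eq_zero hex
        have hp1 : ∏ i ∈ s', θ i ^ (2 * Nc i) = 1 :=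
          Finset.prod_eq_one fun i hi => by rw [hex i hi]; simp
        have hp2 : ∏ i ∈ s', θ i ^ (Nc i) = 1 :=
          Finset.prod_eq_one fun i hi => by rw [hex i hi]; simp
        have hM : Nat.multinomial s' (fun i => 2 * Nc i) = Nat.multinomial s' Nc :=
          Nat.multinomial_congr fun i hi => by rw [hex i hi]
        rw [hp1, hp2, hM, hθj, hL0]
        rw [Finset.sum_eq_zero hex]
        simp
    · -- t > 0
      have hne : t ≠ 0 := ne_of_gt ht0'
      have hprod : ∀ (e : ι → ℕ), ∏ i ∈ s', θ i ^ e i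
          = t ^ (∑ i ∈ s', e i) * ∏ i ∈ s', (θ i / t) ^ e i := by
        intro e
        calc ∏ i ∈ s', θ i ^ e i = ∏ i ∈ s', (t ^ e i * (θ i / t) ^ e i) := by
              refine Finset.prod_congr rfl fun i hi => ?_
              rw [← mul_pow]
              congr 1
              field_simp
          _ = (∏ i ∈ s', t ^ e i) * ∏ i ∈ s', (θ i / t) ^ e i := Finset.prod_mul_distrib
          _ = _ := by rw [Finset.prod_pow_eq_pow_sum]
      have hih : (Nat.multinomial s' (fun i => 2 * Nc i) : ℝ) * ∏ i ∈ s', (θ i / t) ^ (2 * Nc i)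
          ≤ (Nat.multinomial s' Nc : ℝ) * ∏ i ∈ s', (θ i / t) ^ (Nc i) := by
        apply ih Nc (fun i => θ i / t)
        · exact fun i hi => div_nonneg (hθ0 i (mem_insert_of_mem hi)) ht0
        · rw [← Finset.sum_div, ← ht, div_self hne]
      have hbin := binom_double_le K L (θ j) t hpj ht0 (by linarith)
      have hA : (0:ℝ) ≤ (Nat.multinomial s' (fun i => 2 * Nc i) : ℝ)
          * ∏ i ∈ s', (θ i / t) ^ (2 * Nc i) := by
        apply mul_nonneg (by positivity)
        exact Finset.prod_nonneg fun i hi =>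
          pow_nonneg (div_nonneg (hθ0 i (mem_insert_of_mem hi)) ht0) _
      have hB : (0:ℝ) ≤ ((K + L).choose K : ℝ) * θ j ^ K * t ^ L := by positivity
      have key := mul_le_mul hbin hih hA hB
      calc (((2*K + 2*L).choose (2*K) * Nat.multinomial s' (fun i => 2 * Nc i) : ℕ) : ℝ)
            * (θ j ^ (2*K) * ∏ i ∈ s', θ i ^ (2 * Nc i))
          = (((2*(K+L)).choose (2*K) : ℝ) * θ j ^ (2*K) * t ^ (2*L))
            * ((Nat.multinomial s' (fun i => 2 * Nc i) : ℝ) * ∏ i ∈ s', (θ i / t) ^ (2 * Nc i)) := by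
            rw [hprod (fun i => 2 * Nc i), h2L]
            push_cast
            have : 2*K + 2*L = 2*(K+L) := by ring
            rw [this]
            ring
        _ ≤ (((K+L).choose K : ℝ) * θ j ^ K * t ^ L)
            * ((Nat.multinomial s' Nc : ℝ) * ∏ i ∈ s', (θ i / t) ^ (Nc i)) := key
        _ = (((K + L).choose K * Nat.multinomial s' Nc : ℕ) : ℝ)
            * (θ j ^ K * ∏ i ∈ s', θ i ^ (Nc i)) := by
            rw [hprod Nc, ← hL]
            push_cast
            ring



/-- For any positive integer `m`, counts `Nc : Fin m → ℕ` and probability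
vector `θ`, the multinomial probability of counts `Nc` in `N = ∑ Nc i` draws is at least
the multinomial probability of counts `2 * Nc` in `2N` draws. -/
theorem multinomial_prob_double_le (m : ℕ) (hm : 0 < m) (Nc : Fin m → ℕ) (θ : Fin m → ℝ)
    (hθ0 : ∀ i, 0 ≤ θ i) (hθ1 : ∑ i, θ i = 1) :
    (Nat.multinomial Finset.univ (fun i => 2 * Nc i) : ℝ) * ∏ i, θ i ^ (2 * Nc i)
      ≤ (Nat.multinomial Finset.univ Nc : ℝ) * ∏ i, θ i ^ (Nc i) :=
  multinomial_double_le_aux Finset.univ Nc θ (fun i _ => hθ0 i) hθ1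
end

section
/- Let Z_1,...,Z_N be arbitrarily correlated random variables over an alphabet of size m ≥ 2 that are identically distributed (each Z_i has the same marginal distribution). Let q_L(z^N) = (N_1!···N_m!/N!)·(1/binom(N+m-1, m-1)) be the Laplace mixture probability, where N_i is the number of occurrences of symbol i in z^N. Then E[log(1/q_L(Z^N))] ≤ m·log(2eN) + N·H(Z_1), where H denotes Shannon entropy in bits. -/
/-- Marginal distribution of coordinate `j` under a joint pmf `μ` on `Fin N → Fin m`. -/
noncomputable def marg {m N : ℕ} (μ : (Fin N → Fin m) → ℝ) (j : Fin N) (i : Fin m) : ℝ :=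
  ∑ z : Fin N → Fin m, if z j = i then μ z else 0

/-- The Laplace mixture probability `q_L(z^N) = (N₁!⋯N_m!/N!)·(1/binom(N+m-1,m-1))`. -/
noncomputable def laplaceProb (m N : ℕ) (z : Fin N → Fin m) : ℝ :=
  ((∏ i : Fin m, Nat.factorial ((Finset.univ.filter (fun t => z t = i)).card) : ℕ) : ℝ)
    / (Nat.factorial N : ℝ) * (1 / (Nat.choose (N + m - 1) (m - 1) : ℝ))

/-! For any distribution `p` on the alphabet, the multinomial theorem bounds the multinomial
coefficient of the type `(N₁, …, N_m)` of `z` by `∏ pᵢ^(-Nᵢ)`, so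
`log (1/q_L(z)) ≤ ∑ Nᵢ log (1/pᵢ) + log binom(N+m-1, m-1)`, and the binomial coefficient is at
most `(2eN)^m` since `k! ≥ (k/e)^k`. Take `p` to be the common marginal law and average over `z`:
by linearity `E[Nᵢ] = ∑ₜ P(Zₜ = i) = N pᵢ`, however the `Zₜ` are correlated, and the first term
becomes `N·H(Z₁)`. -/

open Finset Real
open scoped Nat

section Counting

variable {α β : Type*} [Fintype α] [DecidableEq β]

def symbolCount (z : α → β) (i : β) : ℕ := #{t | z t = i}

theorem sum_symbolCount [Fintype β] (z : α → β) : ∑ i, symbolCount z i = Fintype.card α := by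
  simpa [symbolCount] using
    (card_eq_sum_card_fiberwise (f := z) (s := univ) (t := univ) fun _ _ ↦ mem_univ _).symm

end Counting

theorem Nat.multinomial_mul_prod_pow_le {ι R : Type*} [Fintype ι] [DecidableEq ι]
    [CommSemiring R] [PartialOrder R] [IsOrderedRing R] {p : ι → R} (hp : ∀ i, 0 ≤ p i)
    (k : ι → ℕ) : (Nat.multinomial univ k : R) * ∏ i, p i ^ k i ≤ (∑ i, p i) ^ ∑ i, k i := by
  rw [sum_pow_eq_sum_piAntidiag]
  exact single_le_sum (f := fun k ↦ (Nat.multinomial univ k : R) * ∏ i, p i ^ k i)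
    (fun k _ ↦ mul_nonneg (Nat.multinomial univ k).cast_nonneg
      (prod_nonneg fun i _ ↦ pow_nonneg (hp i) _))
    (mem_piAntidiag.2 ⟨rfl, fun i _ ↦ mem_univ i⟩)

theorem logb_multinomial_le {ι : Type*} [Fintype ι] [DecidableEq ι] {b : ℝ} (hb : 1 < b)
    {p : ι → ℝ} (hp0 : ∀ i, 0 ≤ p i) (hp1 : ∑ i, p i = 1) (k : ι → ℕ)
    (hk : ∀ i, k i ≠ 0 → 0 < p i) :
    logb b (Nat.multinomial univ k) ≤ ∑ i, k i * -logb b (p i) := by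
  have hpow : ∀ i, 0 < p i ^ k i := fun i ↦ by
    by_cases h : k i = 0
    · simp [h]
    · exact pow_pos (hk i h) _
  have hprod : 0 < ∏ i, p i ^ k i := prod_pos fun i _ ↦ hpow i
  have hle : (Nat.multinomial univ k : ℝ) ≤ (∏ i, p i ^ k i)⁻¹ := by
    rw [← one_div, le_div_iff₀ hprod]
    simpa [hp1] using Nat.multinomial_mul_prod_pow_le hp0 k
  calc logb b (Nat.multinomial univ k)
      ≤ logb b (∏ i, p i ^ k i)⁻¹ :=
        logb_le_logb_of_le hb (by exact_mod_cast Nat.multinomial_pos _ _) hle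
    _ = ∑ i, k i * -logb b (p i) := by
        simp [logb_inv, logb_prod _ _ fun i _ ↦ (hpow i).ne', logb_pow, sum_neg_distrib]

theorem choose_add_le_two_mul_exp_mul_pow {N : ℕ} (hN : 1 ≤ N) (k : ℕ) :
    ((N + k).choose k : ℝ) ≤ (2 * exp 1 * N) ^ k := by
  obtain rfl | hk := k.eq_zero_or_pos
  · simp
  have hfact : (k : ℝ) ^ k ≤ exp 1 ^ k * k ! := by
    have := pow_div_factorial_le_exp (x := (k : ℝ)) k.cast_nonneg k
    rwa [div_le_iff₀ (by positivity), ← exp_one_pow] at this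
  have hNk : (N + k : ℝ) ≤ 2 * N * k := by
    have : (1 : ℝ) ≤ N := by exact_mod_cast hN
    have : (1 : ℝ) ≤ k := by exact_mod_cast hk
    nlinarith
  calc ((N + k).choose k : ℝ) ≤ (N + k : ℝ) ^ k / k ! := by
        exact_mod_cast Nat.choose_le_pow_div k (N + k)
    _ ≤ (2 * N * k : ℝ) ^ k / k ! := by gcongr
    _ = (2 * N) ^ k * k ^ k / k ! := by ring
    _ ≤ (2 * N) ^ k * (exp 1 ^ k * k !) / k ! := by gcongr
    _ = (2 * exp 1 * N) ^ k := by field_simp; ring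

theorem laplaceProb_eq (m N : ℕ) (z : Fin N → Fin m) :
    laplaceProb m N z
      = ((Nat.multinomial univ (symbolCount z) : ℝ) * (N + m - 1).choose (m - 1))⁻¹ := by
  have hspec := Nat.multinomial_spec univ (symbolCount z)
  rw [sum_symbolCount, Fintype.card_fin] at hspec
  have : (0 : ℝ) < ∏ i, ((symbolCount z i)! : ℝ) := prod_pos fun _ _ ↦ by positivity
  change ((∏ i, (symbolCount z i)! : ℕ) : ℝ) / (N ! : ℝ)
      * (1 / ((N + m - 1).choose (m - 1) : ℝ)) = _
  rw [← hspec]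
  push_cast
  field_simp

theorem logb_inv_laplaceProb_le {m N : ℕ} (hN : 1 ≤ N) {p : Fin m → ℝ} (hp0 : ∀ i, 0 ≤ p i)
    (hp1 : ∑ i, p i = 1) (z : Fin N → Fin m) (hz : ∀ i, symbolCount z i ≠ 0 → 0 < p i) :
    logb 2 (1 / laplaceProb m N z)
      ≤ m * logb 2 (2 * exp 1 * N) + ∑ i, symbolCount z i * -logb 2 (p i) := by
  have hchoose : logb 2 ((N + m - 1).choose (m - 1)) ≤ m * logb 2 (2 * exp 1 * N) := by
    have hbase : 1 ≤ 2 * exp 1 * N := by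
      have : (1 : ℝ) ≤ N := by exact_mod_cast hN
      nlinarith [add_one_le_exp (1 : ℝ)]
    calc logb 2 ((N + m - 1).choose (m - 1))
        ≤ logb 2 ((2 * exp 1 * N) ^ m) := by
          refine logb_le_logb_of_le one_lt_two (by exact_mod_cast Nat.choose_pos (by omega)) ?_
          calc ((N + m - 1).choose (m - 1) : ℝ) ≤ ((N + (m - 1)).choose (m - 1) : ℝ) := by
                exact_mod_cast Nat.choose_le_choose (m - 1) (by omega)
            _ ≤ _ := choose_add_le_two_mul_exp_mul_pow hN _
            _ ≤ _ := pow_le_pow_right₀ hbase (Nat.sub_le m 1)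
      _ = m * logb 2 (2 * exp 1 * N) := logb_pow _ _ _
  rw [laplaceProb_eq, one_div, inv_inv, logb_mul (by exact_mod_cast (Nat.multinomial_pos _ _).ne')
    (by exact_mod_cast (Nat.choose_pos (by omega)).ne')]
  linarith [logb_multinomial_le one_lt_two hp0 hp1 (symbolCount z) hz]

section Marginals

variable {m N : ℕ} {μ : (Fin N → Fin m) → ℝ}

theorem marg_nonneg (hμ0 : ∀ z, 0 ≤ μ z) (j : Fin N) (i : Fin m) : 0 ≤ marg μ j i :=
  sum_nonneg fun z _ ↦ by split_ifs <;> simp [hμ0 z]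

theorem sum_marg (μ : (Fin N → Fin m) → ℝ) (j : Fin N) : ∑ i, marg μ j i = ∑ z, μ z := by
  simp only [marg]
  rw [sum_comm]
  simp

theorem le_marg (hμ0 : ∀ z, 0 ≤ μ z) (z : Fin N → Fin m) (j : Fin N) : μ z ≤ marg μ j (z j) := by
  simpa [marg] using single_le_sum (f := fun w ↦ if w j = z j then μ w else 0)
    (fun w _ ↦ by split_ifs <;> simp [hμ0 w]) (mem_univ z)

theorem sum_mul_symbolCount (μ : (Fin N → Fin m) → ℝ) (i : Fin m) :
    ∑ z, μ z * symbolCount z i = ∑ t, marg μ t i := by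
  simp only [marg, symbolCount, card_filter, Nat.cast_sum, mul_sum]
  rw [sum_comm]
  simp

theorem sum_mul_sum_symbolCount_mul (μ : (Fin N → Fin m) → ℝ) (a : Fin m → ℝ) :
    ∑ z, μ z * ∑ i, symbolCount z i * a i = ∑ i, (∑ t, marg μ t i) * a i := by
  simp_rw [← sum_mul_symbolCount, sum_mul, mul_sum, mul_assoc]
  exact sum_comm

end Marginals

theorem laplace_expected_length_correlated_general (m N : ℕ) (hN : 0 < N)
    (μ : (Fin N → Fin m) → ℝ) (hμ0 : ∀ z, 0 ≤ μ z) (hμ1 : ∑ z, μ z = 1)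
    (hid : ∀ j j' : Fin N, ∀ i : Fin m, marg μ j i = marg μ j' i) :
    ∑ z, μ z * Real.logb 2 (1 / laplaceProb m N z)
      ≤ (m : ℝ) * Real.logb 2 (2 * Real.exp 1 * N)
        + (N : ℝ) * (-∑ i : Fin m,
            marg μ ⟨0, hN⟩ i * Real.logb 2 (marg μ ⟨0, hN⟩ i)) := by
  generalize hP : marg μ ⟨0, hN⟩ = P
  have hmarg : ∀ t i, marg μ t i = P i := fun t i ↦ hP ▸ hid t ⟨0, hN⟩ i
  have hP1 : ∑ i, P i = 1 := hP ▸ (sum_marg μ _).trans hμ1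
  have hpt : ∀ z, μ z * logb 2 (1 / laplaceProb m N z)
      ≤ μ z * (m * logb 2 (2 * exp 1 * N) + ∑ i, symbolCount z i * -logb 2 (P i)) := by
    intro z
    obtain hz | hz := (hμ0 z).eq_or_lt
    · simp [← hz]
    refine mul_le_mul_of_nonneg_left (logb_inv_laplaceProb_le hN (fun i ↦ hmarg ⟨0, hN⟩ i ▸
      marg_nonneg hμ0 _ i) hP1 z ?_) hz.le
    intro i hi
    obtain ⟨t, ht⟩ := card_pos.1 (Nat.pos_of_ne_zero hi)
    rw [← hmarg t, ← (mem_filter.1 ht).2]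
    exact hz.trans_le (le_marg hμ0 z t)
  calc _ ≤ ∑ z, μ z * (m * logb 2 (2 * exp 1 * N) + ∑ i, symbolCount z i * -logb 2 (P i)) :=
        sum_le_sum fun z _ ↦ hpt z
    _ = m * logb 2 (2 * exp 1 * N) + ∑ i, (∑ t, marg μ t i) * -logb 2 (P i) := by
        simp only [← sum_mul_sum_symbolCount_mul, mul_add, sum_add_distrib, ← sum_mul, hμ1, one_mul]
    _ = _ := by
        simp only [hmarg, sum_const, card_univ, Fintype.card_fin, nsmul_eq_mul, mul_neg, mul_sum,
          sum_neg_distrib, mul_assoc]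

/-- For identically distributed (but arbitrarily correlated) `Z_1,…,Z_N` over an
alphabet of size `m ≥ 2`, the expected Laplace codelength satisfies
`E[log(1/q_L(Z^N))] ≤ m·log(2eN) + N·H(Z_1)` (entropies in bits). -/
theorem laplace_expected_length_correlated (m N : ℕ) (hm : 2 ≤ m) (hN : 0 < N)
    (μ : (Fin N → Fin m) → ℝ) (hμ0 : ∀ z, 0 ≤ μ z) (hμ1 : ∑ z, μ z = 1)
    (hid : ∀ j j' : Fin N, ∀ i : Fin m, marg μ j i = marg μ j' i) :
    ∑ z, μ z * Real.logb 2 (1 / laplaceProb m N z)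
      ≤ (m : ℝ) * Real.logb 2 (2 * Real.exp 1 * N)
        + (N : ℝ) * (-∑ i : Fin m,
            marg μ ⟨0, hN⟩ i * Real.logb 2 (marg μ ⟨0, hN⟩ i)) :=
  laplace_expected_length_correlated_general m N hN μ hμ0 hμ1 hid
end

section
/- Let A_n ~ SBM(n, L, p, f(n)Q) where f(n) = Ω(1/n²), f(n) = o(1), Q is a symmetric matrix with constant positive entries, and p has constant positive entries with L constant. Then H(A_n) = binom(n,2)·f(n)·log(1/f(n))·(p^T Q p + o(1)) as n → ∞. -/
/-!
Conditionally on the labels, the upper-triangular part of `A_n` is a vector of independent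
Bernoulli variables, so its law is a mixture of product Bernoulli laws in which every edge is
present with probability `θ = f(n) · pᵀQp`. Gibbs' inequality against the product Bernoulli(`θ`)
law bounds the entropy above by `binom(n,2) · h(θ)`. Every graph has probability at most
`(f(n) K)^#edges` when `K` bounds the entries of `Q`, so the entropy is at least
`binom(n,2) · θ · log (1 / (f(n) K))`.
Both bounds are `binom(n,2) · f(n) · log (1 / f(n)) · (pᵀQp + O(1 / log (1 / f(n))))`.
-/

/-- The pmf of the adjacency matrix of `SBM(n, L, p, W)`. -/
noncomputable def sbmProb (n L : ℕ) (p : Fin L → ℝ) (W : Fin L → Fin L → ℝ)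
    (a : Fin n → Fin n → Bool) : ℝ :=
  if (∀ i, a i i = false) ∧ (∀ i j, a i j = a j i) then
    ∑ x : Fin n → Fin L, (∏ i, p (x i)) *
      ∏ i : Fin n, ∏ j : Fin n,
        if i < j then (if a i j then W (x i) (x j) else 1 - W (x i) (x j)) else 1
  else 0

/-- Shannon entropy (in bits) of a pmf on a finite type. -/
noncomputable def entropy {α : Type*} [Fintype α] (P : α → ℝ) : ℝ :=
  -∑ a, P a * Real.logb 2 (P a)

open Finset Real Filter Topology

section CrossEntropy

variable {Ω : Type*} [Fintype Ω] {P R : Ω → ℝ}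

theorem sum_negMulLog_le_sum_mul_neg_log (hP : ∀ ω, 0 ≤ P ω) (hR : ∀ ω, 0 ≤ R ω)
    (hPR : ∀ ω, R ω = 0 → P ω = 0) (hRP : ∑ ω, R ω ≤ ∑ ω, P ω) :
    ∑ ω, negMulLog (P ω) ≤ ∑ ω, P ω * -log (R ω) := by
  have hterm : ∀ ω, negMulLog (P ω) - P ω * -log (R ω) ≤ R ω - P ω := by
    intro ω
    rcases (hP ω).eq_or_lt with h | h
    · simpa [← h] using hR ω
    have hRpos : 0 < R ω := (hR ω).lt_of_ne fun h0 => h.ne' (hPR ω h0.symm)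
    calc negMulLog (P ω) - P ω * -log (R ω) = P ω * log (R ω / P ω) := by
          rw [negMulLog, log_div hRpos.ne' h.ne']; ring
      _ ≤ P ω * (R ω / P ω - 1) := by gcongr; exact log_le_sub_one_of_pos (by positivity)
      _ = R ω - P ω := by field_simp
  have := sum_le_sum fun ω (_ : ω ∈ univ) => hterm ω
  rw [sum_sub_distrib, sum_sub_distrib] at this
  linarith

theorem sum_mul_neg_log_le_sum_negMulLog (hP : ∀ ω, 0 ≤ P ω) (hPR : ∀ ω, P ω ≤ R ω) :
    ∑ ω, P ω * -log (R ω) ≤ ∑ ω, negMulLog (P ω) := by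
  refine sum_le_sum fun ω _ => ?_
  rcases (hP ω).eq_or_lt with h | h
  · simp [← h]
  rw [negMulLog, neg_mul, ← mul_neg]
  gcongr
  exact hPR ω

end CrossEntropy

theorem entropy_eq_sum_negMulLog_div {α : Type*} [Fintype α] (P : α → ℝ) :
    entropy P = (∑ a, negMulLog (P a)) / log 2 := by
  simp only [entropy, negMulLog, logb, sum_div, ← sum_neg_distrib]
  congr 1 with a
  ring

theorem entropy_div_mul_logb_two {α : Type*} [Fintype α] (P : α → ℝ) (c x : ℝ) :
    entropy P / (c * logb 2 x) = (∑ a, negMulLog (P a)) / (c * log x) := by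
  have : log 2 ≠ 0 := by positivity
  rw [entropy_eq_sum_negMulLog_div, logb]
  field_simp

theorem binEntropy_le_negMulLog_add_self {θ : ℝ} (h : θ ≤ 1) :
    binEntropy θ ≤ negMulLog θ + θ := by
  rw [binEntropy_eq_negMulLog_add_negMulLog_one_sub]
  linarith [negMulLog_le_one_sub_self (sub_nonneg.2 h)]

theorem sum_mul_sum_apply_eq {ι : Type*} [Fintype ι] [DecidableEq ι] {P : (ι → Bool) → ℝ} {θ : ℝ}
    (hP : ∑ b, P b = 1) (hθ : ∀ q, ∑ b, (if b q then P b else 0) = θ) (φ : Bool → ℝ) :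
    ∑ b, P b * ∑ q, φ (b q) = Fintype.card ι * (θ * φ true + (1 - θ) * φ false) := by
  have hmarg : ∀ q, ∑ b, P b * φ (b q) = θ * φ true + (1 - θ) * φ false := by
    intro q
    have hsplit : ∀ b : ι → Bool,
        P b * φ (b q) = φ false * P b + (φ true - φ false) * (if b q then P b else 0) := by
      intro b; cases b q <;> simp <;> ring
    simp only [hsplit, sum_add_distrib, ← mul_sum, hP, hθ]
    ring
  simp only [mul_sum]
  rw [sum_comm]
  simp [hmarg, mul_add]

section Bernoulli

variable {ι : Type*} [Fintype ι]

def bernoulliProb (w : ℝ) (b : Bool) : ℝ := if b then w else 1 - w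

def bernoulliProd (w : ι → ℝ) (b : ι → Bool) : ℝ := ∏ q, bernoulliProb (w q) (b q)

theorem bernoulliProb_nonneg {w : ℝ} (h0 : 0 ≤ w) (h1 : w ≤ 1) (b : Bool) :
    0 ≤ bernoulliProb w b := by
  cases b <;> simp [bernoulliProb] <;> linarith

theorem sum_bernoulliProb (w : ℝ) : ∑ b, bernoulliProb w b = 1 := by
  simp [bernoulliProb]

variable [DecidableEq ι]

theorem sum_bernoulliProd (w : ι → ℝ) : ∑ b, bernoulliProd w b = 1 := by
  simp only [bernoulliProd, ← Fintype.prod_sum, sum_bernoulliProb, prod_const_one]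

theorem sum_ite_bernoulliProd (w : ι → ℝ) (q : ι) :
    ∑ b, (if b q then bernoulliProd w b else 0) = w q := by
  have hfactor : ∀ b : ι → Bool, (if b q then bernoulliProd w b else 0) =
      ∏ r, bernoulliProb (w r) (b r) * (if r = q then (if b r then 1 else 0) else 1) := by
    intro b
    rw [prod_mul_distrib, Fintype.prod_ite_eq', bernoulliProd]
    split_ifs <;> simp
  rw [sum_congr rfl fun b _ => hfactor b, ← Fintype.prod_sum
    (fun r t => bernoulliProb (w r) t * (if r = q then (if t then 1 else 0) else 1)),
    ← Fintype.prod_ite_eq' q w]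
  refine prod_congr rfl fun r _ => ?_
  split_ifs <;> simp [bernoulliProb]

end Bernoulli

section Mixture

variable {ι Ξ : Type*} [Fintype ι] [Fintype Ξ]
  {ρ : Ξ → ℝ} {w : Ξ → ι → ℝ}

def bernoulliMix (ρ : Ξ → ℝ) (w : Ξ → ι → ℝ) (b : ι → Bool) : ℝ :=
  ∑ ξ, ρ ξ * bernoulliProd (w ξ) b

theorem bernoulliMix_nonneg (hρ : ∀ ξ, 0 ≤ ρ ξ) (hw0 : ∀ ξ q, 0 ≤ w ξ q)
    (hw1 : ∀ ξ q, w ξ q ≤ 1) (b : ι → Bool) : 0 ≤ bernoulliMix ρ w b :=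
  sum_nonneg fun ξ _ => mul_nonneg (hρ ξ)
    (prod_nonneg fun q _ => bernoulliProb_nonneg (hw0 ξ q) (hw1 ξ q) _)

theorem bernoulliMix_le_prod {M : ℝ} (hρ : ∀ ξ, 0 ≤ ρ ξ) (hρ1 : ∑ ξ, ρ ξ = 1)
    (hw0 : ∀ ξ q, 0 ≤ w ξ q) (hw1 : ∀ ξ q, w ξ q ≤ 1) (hwM : ∀ ξ q, w ξ q ≤ M)
    (b : ι → Bool) : bernoulliMix ρ w b ≤ ∏ q, if b q then M else 1 := by
  calc bernoulliMix ρ w b ≤ ∑ ξ, ρ ξ * ∏ q, if b q then M else 1 := by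
        refine sum_le_sum fun ξ _ => mul_le_mul_of_nonneg_left ?_ (hρ ξ)
        refine prod_le_prod (fun q _ => bernoulliProb_nonneg (hw0 ξ q) (hw1 ξ q) _)
          fun q _ => ?_
        cases b q <;> simp [bernoulliProb, hwM, hw0]
    _ = ∏ q, if b q then M else 1 := by rw [← sum_mul, hρ1, one_mul]

variable [DecidableEq ι]

theorem sum_bernoulliMix (hρ1 : ∑ ξ, ρ ξ = 1) : ∑ b, bernoulliMix ρ w b = 1 := by
  simp only [bernoulliMix]
  rw [sum_comm]
  simp [← mul_sum, sum_bernoulliProd, hρ1]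

theorem sum_ite_bernoulliMix (q : ι) :
    ∑ b, (if b q then bernoulliMix ρ w b else 0) = ∑ ξ, ρ ξ * w ξ q := by
  simp only [bernoulliMix, ← sum_filter]
  rw [sum_comm]
  simp only [← mul_sum, sum_filter, sum_ite_bernoulliProd]

variable {θ : ℝ} (hρ : ∀ ξ, 0 ≤ ρ ξ) (hρ1 : ∑ ξ, ρ ξ = 1)
  (hw0 : ∀ ξ q, 0 ≤ w ξ q) (hw1 : ∀ ξ q, w ξ q ≤ 1) (hθ : ∀ q, ∑ ξ, ρ ξ * w ξ q = θ)
include hρ hρ1 hw0 hw1 hθ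

theorem sum_negMulLog_bernoulliMix_le (hθ0 : 0 < θ) (hθ1 : θ < 1) :
    ∑ b, negMulLog (bernoulliMix ρ w b) ≤ Fintype.card ι * binEntropy θ := by
  have hR : ∀ b : ι → Bool, 0 < bernoulliProd (fun _ => θ) b := fun b =>
    prod_pos fun q _ => by cases b q <;> simp [bernoulliProb] <;> linarith
  calc ∑ b, negMulLog (bernoulliMix ρ w b)
      ≤ ∑ b, bernoulliMix ρ w b * -log (bernoulliProd (fun _ => θ) b) :=
        sum_negMulLog_le_sum_mul_neg_log (bernoulliMix_nonneg hρ hw0 hw1)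
          (fun b => (hR b).le) (fun b h => absurd h (hR b).ne')
          (by rw [sum_bernoulliProd, sum_bernoulliMix hρ1])
    _ = ∑ b, bernoulliMix ρ w b * ∑ q, -log (bernoulliProb θ (b q)) := by
        refine sum_congr rfl fun b _ => ?_
        rw [bernoulliProd, log_prod fun q _ => ?_, sum_neg_distrib]
        cases b q <;> simp [bernoulliProb] <;> linarith
    _ = Fintype.card ι * binEntropy θ := by
        rw [sum_mul_sum_apply_eq (sum_bernoulliMix hρ1)
          (fun q => (sum_ite_bernoulliMix q).trans (hθ q)) fun t => -log (bernoulliProb θ t)]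
        simp [bernoulliProb, binEntropy, log_inv]

theorem mul_log_inv_le_sum_negMulLog_bernoulliMix {M : ℝ} (hM : 0 < M)
    (hwM : ∀ ξ q, w ξ q ≤ M) :
    Fintype.card ι * θ * log M⁻¹ ≤ ∑ b, negMulLog (bernoulliMix ρ w b) := by
  calc Fintype.card ι * θ * log M⁻¹
      = ∑ b, bernoulliMix ρ w b * ∑ q, -log (if b q then M else 1) := by
        rw [sum_mul_sum_apply_eq (sum_bernoulliMix hρ1)
          (fun q => (sum_ite_bernoulliMix q).trans (hθ q)) fun t => -log (if t then M else 1)]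
        simp [log_inv, mul_assoc]
    _ = ∑ b, bernoulliMix ρ w b * -log (∏ q, if b q then M else 1) := by
        refine sum_congr rfl fun b _ => ?_
        rw [log_prod fun q _ => by split_ifs <;> positivity, sum_neg_distrib]
    _ ≤ ∑ b, negMulLog (bernoulliMix ρ w b) :=
        sum_mul_neg_log_le_sum_negMulLog (bernoulliMix_nonneg hρ hw0 hw1)
          (bernoulliMix_le_prod hρ hρ1 hw0 hw1 hwM)

end Mixture

theorem sum_prod_mul_apply_mul_apply {ι α : Type*} [Fintype ι] [DecidableEq ι] [Fintype α]
    {p : α → ℝ} (hp1 : ∑ t, p t = 1) {i j : ι} (hij : i ≠ j) (A B : α → ℝ) :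
    ∑ x : ι → α, (∏ k, p (x k)) * (A (x i) * B (x j)) =
      (∑ t, p t * A t) * ∑ t, p t * B t := by
  set g : ι → α → ℝ := fun k t => p t * (if k = i then A t else 1) * (if k = j then B t else 1)
  have hg : ∀ x : ι → α, (∏ k, p (x k)) * (A (x i) * B (x j)) = ∏ k, g k (x k) := by
    intro x
    simp only [g, prod_mul_distrib, Fintype.prod_ite_eq']
    ring
  have hsum : ∀ k, ∑ t, g k t =
      (if k = i then ∑ t, p t * A t else 1) * (if k = j then ∑ t, p t * B t else 1) := by
    intro k
    by_cases hi : k = i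
    · simp [g, hi, hij]
    by_cases hj : k = j <;> simp [g, hi, hj, hij.symm, hp1]
  simp only [hg, ← Fintype.prod_sum, hsum, prod_mul_distrib, Fintype.prod_ite_eq']

theorem sum_prod_mul_apply_apply {ι α : Type*} [Fintype ι] [DecidableEq ι] [Fintype α]
    [DecidableEq α] {p : α → ℝ} (hp1 : ∑ t, p t = 1) {i j : ι} (hij : i ≠ j)
    (F : α → α → ℝ) :
    ∑ x : ι → α, (∏ k, p (x k)) * F (x i) (x j) = ∑ u, ∑ v, p u * p v * F u v := by
  have hF : ∀ x : ι → α, F (x i) (x j) =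
      ∑ u, ∑ v, F u v * ((if x i = u then 1 else 0) * (if x j = v then 1 else 0)) := by
    simp [mul_ite]
  simp only [hF, mul_sum]
  rw [sum_comm]
  refine sum_congr rfl fun u _ => ?_
  rw [sum_comm]
  refine sum_congr rfl fun v _ => ?_
  simp only [mul_left_comm _ (F u v), ← mul_sum]
  rw [sum_prod_mul_apply_mul_apply hp1 hij (fun t => if t = u then 1 else 0)
    (fun t => if t = v then 1 else 0)]
  simp
  ring

theorem sum_prod_apply_eq_one {ι α : Type*} [Fintype ι] [DecidableEq ι] [Fintype α]
    {p : α → ℝ} (hp1 : ∑ t, p t = 1) : ∑ x : ι → α, ∏ k, p (x k) = 1 := by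
  rw [← Fintype.prod_sum (fun _ => p)]
  simp [hp1]

theorem sum_sum_mul_const_mul {α : Type*} [Fintype α] (p : α → ℝ) (Q : α → α → ℝ) (φ : ℝ) :
    ∑ u, ∑ v, p u * p v * (φ * Q u v) = φ * ∑ u, ∑ v, p u * p v * Q u v := by
  rw [mul_sum]
  refine sum_congr rfl fun u _ => ?_
  rw [mul_sum]
  exact sum_congr rfl fun v _ => by ring

theorem le_sum_sum_of_nonneg {α : Type*} [Fintype α] {Q : α → α → ℝ}
    (hQ : ∀ u v, 0 ≤ Q u v) (u v : α) : Q u v ≤ ∑ i, ∑ j, Q i j :=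
  (single_le_sum (fun j _ => hQ u j) (mem_univ v)).trans
    (single_le_sum (fun i _ => sum_nonneg fun j _ => hQ i j) (mem_univ u))

theorem tendsto_div_mul_of_bounds {ι : Type*} {l : Filter ι} {X D u : ι → ℝ} {s a b : ℝ}
    (hu : Tendsto u l atTop) (hD : ∀ᶠ i in l, 0 < D i)
    (hlo : ∀ᶠ i in l, D i * (s * u i - a) ≤ X i)
    (hhi : ∀ᶠ i in l, X i ≤ D i * (s * u i + b)) :
    Tendsto (fun i => X i / (D i * u i)) l (𝓝 s) := by
  have hvanish : ∀ c, Tendsto (fun i => c / u i) l (𝓝 0) := fun c =>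
    tendsto_const_nhds.div_atTop hu
  refine tendsto_of_tendsto_of_tendsto_of_le_of_le'
    (by simpa using (hvanish a).const_sub s) (by simpa using (hvanish b).const_add s) ?_ ?_
  · filter_upwards [hD, hlo, hu.eventually_gt_atTop 0] with i hD hlo hu
    calc s - a / u i = D i * (s * u i - a) / (D i * u i) := by field_simp
      _ ≤ X i / (D i * u i) := by gcongr
  · filter_upwards [hD, hhi, hu.eventually_gt_atTop 0] with i hD hhi hu
    calc X i / (D i * u i) ≤ D i * (s * u i + b) / (D i * u i) := by gcongr
      _ = s + b / u i := by field_simp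

namespace SBM

variable {n : ℕ}

abbrev Pair (n : ℕ) := {q : Fin n × Fin n // q.1 < q.2}

theorem card_pair : Fintype.card (Pair n) = n.choose 2 := by
  rw [Fintype.card_subtype, Fintype.card_product_filter_lt, Fintype.card_fin]

theorem prod_ite_lt_eq_prod_pair {M : Type*} [CommMonoid M] (g : Fin n → Fin n → M) :
    ∏ i, ∏ j, (if i < j then g i j else 1) = ∏ q : Pair n, g q.1.1 q.1.2 := by
  rw [← Fintype.prod_prod_type', ← prod_filter]
  exact prod_subtype _ (fun _ => by simp) _

def IsGraph (a : Fin n → Fin n → Bool) : Prop := (∀ i, a i i = false) ∧ ∀ i j, a i j = a j i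

instance : DecidablePred (IsGraph (n := n)) := fun _ => inferInstanceAs (Decidable (_ ∧ _))

def edges (a : Fin n → Fin n → Bool) (q : Pair n) : Bool := a q.1.1 q.1.2

def ofEdges (b : Pair n → Bool) (i j : Fin n) : Bool :=
  if h : i < j then b ⟨(i, j), h⟩ else if h : j < i then b ⟨(j, i), h⟩ else false

theorem isGraph_ofEdges (b : Pair n → Bool) : IsGraph (ofEdges b) := by
  refine ⟨fun i => by simp [ofEdges], fun i j => ?_⟩
  rcases lt_trichotomy i j with h | rfl | h
  · simp [ofEdges, h, h.not_gt]
  · rfl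
  · simp [ofEdges, h, h.not_gt]

theorem ofEdges_edges {a : Fin n → Fin n → Bool} (ha : IsGraph a) : ofEdges (edges a) = a := by
  funext i j
  rcases lt_trichotomy i j with h | rfl | h
  · simp [ofEdges, edges, h]
  · simp [ofEdges, ha.1 i]
  · simp [ofEdges, edges, h, h.not_gt, ha.2 i j]

theorem edges_ofEdges (b : Pair n → Bool) : edges (ofEdges b) = b := by
  funext q
  simp [edges, ofEdges, q.2]

theorem sum_ite_isGraph {M : Type*} [AddCommMonoid M] (F : (Pair n → Bool) → M) :
    ∑ a, (if IsGraph a then F (edges a) else 0) = ∑ b, F b := by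
  rw [← sum_filter]
  exact sum_nbij' edges ofEdges (by simp) (fun b _ => by simpa using isGraph_ofEdges b)
    (fun a ha => ofEdges_edges (mem_filter.1 ha).2) (fun b _ => edges_ofEdges b) (by simp)

section Bounds

variable {L : ℕ} {p : Fin L → ℝ} {W : Fin L → Fin L → ℝ}

theorem sbmProb_eq_ite (a : Fin n → Fin n → Bool) :
    sbmProb n L p W a = if IsGraph a then
      bernoulliMix (fun x : Fin n → Fin L => ∏ i, p (x i))
        (fun x (q : Pair n) => W (x q.1.1) (x q.1.2)) (edges a) else 0 := by
  simp only [sbmProb, bernoulliMix, bernoulliProd, bernoulliProb, prod_ite_lt_eq_prod_pair]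
  rfl

theorem sum_negMulLog_sbmProb :
    ∑ a, negMulLog (sbmProb n L p W a) =
      ∑ b, negMulLog (bernoulliMix (fun x : Fin n → Fin L => ∏ i, p (x i))
        (fun x (q : Pair n) => W (x q.1.1) (x q.1.2)) b) := by
  simp only [sbmProb_eq_ite, apply_ite negMulLog, negMulLog_zero]
  exact sum_ite_isGraph fun b => negMulLog (bernoulliMix _ _ b)

variable (hp : ∀ i, 0 ≤ p i) (hp1 : ∑ i, p i = 1) (hW0 : ∀ u v, 0 ≤ W u v)
  (hW1 : ∀ u v, W u v ≤ 1)
include hp hp1 hW0 hW1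

theorem mul_log_inv_le_sum_negMulLog_sbmProb {M : ℝ} (hM : 0 < M) (hWM : ∀ u v, W u v ≤ M) :
    n.choose 2 * (∑ u, ∑ v, p u * p v * W u v) * log M⁻¹ ≤
      ∑ a, negMulLog (sbmProb n L p W a) := by
  rw [sum_negMulLog_sbmProb, ← card_pair]
  exact mul_log_inv_le_sum_negMulLog_bernoulliMix (fun _ => prod_nonneg fun i _ => hp _)
    (sum_prod_apply_eq_one hp1) (fun _ _ => hW0 _ _) (fun _ _ => hW1 _ _)
    (fun q => sum_prod_mul_apply_apply hp1 q.2.ne W) hM (fun _ _ => hWM _ _)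

theorem sum_negMulLog_sbmProb_le (hθ0 : 0 < ∑ u, ∑ v, p u * p v * W u v)
    (hθ1 : ∑ u, ∑ v, p u * p v * W u v < 1) :
    ∑ a, negMulLog (sbmProb n L p W a) ≤
      n.choose 2 * binEntropy (∑ u, ∑ v, p u * p v * W u v) := by
  rw [sum_negMulLog_sbmProb, ← card_pair]
  exact sum_negMulLog_bernoulliMix_le (fun _ => prod_nonneg fun i _ => hp _)
    (sum_prod_apply_eq_one hp1) (fun _ _ => hW0 _ _) (fun _ _ => hW1 _ _)
    (fun q => sum_prod_mul_apply_apply hp1 q.2.ne W) hθ0 hθ1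

end Bounds

section Scaled

variable {L : ℕ} {p : Fin L → ℝ} {Q : Fin L → Fin L → ℝ} {s φ : ℝ}
  (hp : ∀ i, 0 ≤ p i) (hp1 : ∑ i, p i = 1) (hQ : ∀ u v, 0 ≤ Q u v)
  (hs : ∑ u, ∑ v, p u * p v * Q u v = s) (hφ : 0 < φ) (hφQ : ∀ u v, φ * Q u v ≤ 1)
include hp hp1 hQ hs hφ hφQ

theorem mul_sub_le_sum_negMulLog_sbmProb_scaled {K : ℝ} (hK : 0 < K)
    (hQK : ∀ u v, Q u v ≤ K) :
    n.choose 2 * φ * (s * log φ⁻¹ - s * log K) ≤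
      ∑ a, negMulLog (sbmProb n L p (fun u v => φ * Q u v) a) := by
  have hbound := mul_log_inv_le_sum_negMulLog_sbmProb (n := n) hp hp1
    (fun u v => mul_nonneg hφ.le (hQ u v)) hφQ (mul_pos hφ hK)
    (fun u v => mul_le_mul_of_nonneg_left (hQK u v) hφ.le)
  rw [sum_sum_mul_const_mul, hs, mul_inv, log_mul (by positivity) (by positivity),
    log_inv K] at hbound
  linarith

theorem sum_negMulLog_sbmProb_scaled_le (hs0 : 0 < s) (hφs : φ * s < 1) :
    ∑ a, negMulLog (sbmProb n L p (fun u v => φ * Q u v) a) ≤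
      n.choose 2 * φ * (s * log φ⁻¹ + s * (1 - log s)) := by
  have hθ : ∑ u, ∑ v, p u * p v * (φ * Q u v) = φ * s := by rw [sum_sum_mul_const_mul, hs]
  calc ∑ a, negMulLog (sbmProb n L p (fun u v => φ * Q u v) a)
      ≤ n.choose 2 * binEntropy (φ * s) := by
        simpa only [hθ] using sum_negMulLog_sbmProb_le (n := n) hp hp1
          (fun u v => mul_nonneg hφ.le (hQ u v)) hφQ (hθ ▸ by positivity) (hθ ▸ hφs)
    _ ≤ n.choose 2 * (negMulLog (φ * s) + φ * s) := by
        gcongr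
        exact binEntropy_le_negMulLog_add_self hφs.le
    _ = n.choose 2 * φ * (s * log φ⁻¹ + s * (1 - log s)) := by
        rw [negMulLog, log_mul hφ.ne' hs0.ne', log_inv]
        ring

end Scaled

end SBM

theorem sbm_entropy_asymptotics_general (L : ℕ)
    (p : Fin L → ℝ) (Q : Fin L → Fin L → ℝ)
    (hp : ∀ i, 0 < p i) (hp1 : ∑ i, p i = 1)
    (hQ : ∀ i j, 0 < Q i j)
    (f : ℕ → ℝ) (hf0 : ∀ n, 0 < f n) (hfW : ∀ n i j, f n * Q i j ≤ 1)
    (hfo : Filter.Tendsto f Filter.atTop (nhds 0)) :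
    Filter.Tendsto (fun n =>
        entropy (sbmProb n L p (fun i j => f n * Q i j))
          / ((Nat.choose n 2 : ℝ) * f n * Real.logb 2 (1 / f n)))
      Filter.atTop (nhds (∑ i, ∑ j, p i * p j * Q i j)) := by
  have hne : (univ : Finset (Fin L)).Nonempty := nonempty_of_sum_ne_zero (f := p) (by simp [hp1])
  set s := ∑ i, ∑ j, p i * p j * Q i j with hs
  set K := ∑ i, ∑ j, Q i j
  have hs0 : 0 < s := sum_pos (fun i _ => sum_pos (fun j _ =>
    mul_pos (mul_pos (hp i) (hp j)) (hQ i j)) hne) hne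
  have hK0 : 0 < K := sum_pos (fun i _ => sum_pos (fun j _ => hQ i j) hne) hne
  have hlog : Tendsto (fun n => log (f n)⁻¹) atTop atTop :=
    tendsto_log_atTop.comp (tendsto_nhdsWithin_of_tendsto_nhds_of_eventually_within _ hfo
      (Eventually.of_forall hf0)).inv_tendsto_nhdsGT_zero
  have hsmall : ∀ᶠ n in atTop, f n * s < 1 :=
    (hfo.mul_const s).eventually (gt_mem_nhds (by simp))
  simp only [entropy_div_mul_logb_two, one_div]
  refine tendsto_div_mul_of_bounds hlog (a := s * log K) (b := s * (1 - log s)) ?_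
    (Eventually.of_forall fun n => SBM.mul_sub_le_sum_negMulLog_sbmProb_scaled
      (fun i => (hp i).le) hp1 (fun u v => (hQ u v).le) hs.symm (hf0 n) (hfW n) hK0 (le_sum_sum_of_nonneg fun u v => (hQ u v).le)) ?_
  · filter_upwards [eventually_ge_atTop 2] with n hn
    exact mul_pos (by exact_mod_cast Nat.choose_pos hn) (hf0 n)
  · filter_upwards [hsmall] with n hn
    exact SBM.sum_negMulLog_sbmProb_scaled_le (fun i => (hp i).le) hp1 (fun u v => (hQ u v).le)
      hs.symm (hf0 n) (hfW n) hs0 hn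

/-- For `A_n ~ SBM(n, L, p, f(n)Q)` with `f(n) = Ω(1/n²)`, `f(n) = o(1)`,
constant positive symmetric `Q` and constant positive `p`, the entropy satisfies
`H(A_n) = binom(n,2)·f(n)·log(1/f(n))·(pᵀQp + o(1))`, stated as convergence of the ratio
`H(A_n)/(binom(n,2) f(n) log(1/f(n)))` to `pᵀQp`. -/
theorem sbm_entropy_asymptotics (L : ℕ) (hL : 0 < L)
    (p : Fin L → ℝ) (Q : Fin L → Fin L → ℝ)
    (hp : ∀ i, 0 < p i) (hp1 : ∑ i, p i = 1)
    (hQ : ∀ i j, 0 < Q i j) (hQs : ∀ i j, Q i j = Q j i)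
    (f : ℕ → ℝ) (hf0 : ∀ n, 0 < f n) (hfW : ∀ n i j, f n * Q i j ≤ 1)
    (c : ℝ) (hc : 0 < c)
    (hflb : ∀ᶠ n : ℕ in Filter.atTop, c / (n : ℝ) ^ 2 ≤ f n)
    (hfo : Filter.Tendsto f Filter.atTop (nhds 0)) :
    Filter.Tendsto (fun n =>
        entropy (sbmProb n L p (fun i j => f n * Q i j))
          / ((Nat.choose n 2 : ℝ) * f n * Real.logb 2 (1 / f n)))
      Filter.atTop (nhds (∑ i, ∑ j, p i * p j * Q i j)) :=
  sbm_entropy_asymptotics_general L p Q hp hp1 hQ f hf0 hfW hfo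
end

section
/- For any lossless compressor C : A → {0,1}* (a one-to-one map into finite binary strings) and any random variable X on the finite set A, the expected codeword length satisfies E[ℓ(C(X))] ≥ H(X) - log(e(H(X)+1)), where ℓ denotes the length of the binary string and H is Shannon entropy in bits. -/
/-!
Let `L` be the expected code length and `θ = L / (L + 1)`. An injective code has at most `2 ^ l`
words of length `l`, so the weights `q a = (θ / 2) ^ ℓ(C a) * (1 - θ)` have total mass at most
`∑ₗ θ ^ l (1 - θ) ≤ 1`. Gibbs' inequality against `q` bounds the entropy in nats by
`L log 2 + L log ((L + 1) / L) + log (L + 1)`, and `L log (1 + 1 / L) ≤ 1`. In bits this reads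
`H ≤ L + log₂ (e (L + 1))`, which gives the claim after comparing `L` with `H`.
-/

open Finset Real

lemma sum_pow_length_mul_one_sub_le_one {α : Type*} [Fintype α] (T : Finset (List α)) {r : ℝ}
    (hr0 : 0 ≤ r) (hr1 : Fintype.card α * r ≤ 1) :
    (∑ s ∈ T, r ^ s.length) * (1 - Fintype.card α * r) ≤ 1 := by
  set k : ℝ := (Fintype.card α : ℝ)
  set m := T.sup List.length
  have hmaps : ∀ s ∈ T, s.length ∈ range (m + 1) :=
    fun s hs => mem_range.2 (Nat.lt_succ_of_le (le_sup hs))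
  have hfiber (l : ℕ) : ∑ s ∈ T with s.length = l, r ^ s.length ≤ (k * r) ^ l := by
    rw [sum_congr rfl fun s hs => by rw [(mem_filter.1 hs).2], sum_const, nsmul_eq_mul, mul_pow]
    have hcard : (#{s ∈ T | s.length = l} : ℝ) ≤ (Fintype.card α : ℝ) ^ l := by
      exact_mod_cast card_filter_length_eq_le
    exact mul_le_mul_of_nonneg_right hcard (by positivity)
  calc (∑ s ∈ T, r ^ s.length) * (1 - k * r)
      ≤ (∑ l ∈ range (m + 1), (k * r) ^ l) * (1 - k * r) := by
        rw [← sum_fiberwise_of_maps_to hmaps]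
        exact mul_le_mul_of_nonneg_right (sum_le_sum fun l _ => hfiber l) (by linarith)
    _ = 1 - (k * r) ^ (m + 1) := geom_sum_mul_neg _ _
    _ ≤ 1 := by linarith [pow_nonneg (by positivity : 0 ≤ k * r) (m + 1)]

lemma mul_log_sub_mul_log_le_sub {x y : ℝ} (hx : 0 ≤ x) (hy : 0 ≤ y)
    (hxy : x ≠ 0 → y ≠ 0) :
    x * log y - x * log x ≤ y - x := by
  rcases hx.eq_or_lt with rfl | hx
  · simpa using hy
  have hy : 0 < y := hy.lt_of_ne (hxy hx.ne').symm
  calc x * log y - x * log x = x * log (y / x) := by rw [log_div hy.ne' hx.ne']; ring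
    _ ≤ x * (y / x - 1) := mul_le_mul_of_nonneg_left (log_le_sub_one_of_pos (by positivity)) hx.le
    _ = y - x := by field_simp

lemma neg_sum_mul_log_le_neg_sum_mul_log {ι : Type*} [Fintype ι] {p q : ι → ℝ}
    (hp : ∀ i, 0 ≤ p i) (hq : ∀ i, 0 ≤ q i) (hpq : ∀ i, p i ≠ 0 → q i ≠ 0)
    (hsum : ∑ i, q i ≤ ∑ i, p i) :
    -∑ i, p i * log (p i) ≤ -∑ i, p i * log (q i) := by
  have hterms := sum_le_sum fun i (_ : i ∈ univ) =>
    mul_log_sub_mul_log_le_sub (hp i) (hq i) (hpq i)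
  simp only [sum_sub_distrib] at hterms
  linarith

section InjectiveCode

variable {A α : Type*} [Fintype A] [Fintype α] {p : A → ℝ} {C : A → List α}

lemma neg_sum_mul_log_le_of_injective (hp0 : ∀ a, 0 ≤ p a) (hp1 : ∑ a, p a = 1)
    (hC : Function.Injective C) {r : ℝ} (hr0 : 0 ≤ r) (hr1 : Fintype.card α * r < 1)
    (hsupp : ∀ a, p a ≠ 0 → r ^ (C a).length ≠ 0) :
    -∑ a, p a * log (p a)
      ≤ -(∑ a, p a * (C a).length) * log r - log (1 - Fintype.card α * r) := by
  classical
  set c : ℝ := 1 - Fintype.card α * r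
  have hc : 0 < c := by simp only [c]; linarith
  set q : A → ℝ := fun a => r ^ (C a).length * c
  have hq1 : ∑ a, q a ≤ ∑ a, p a := by
    rw [hp1, ← sum_mul,
      ← sum_image (f := fun s : List α => r ^ s.length) fun x _ y _ h => hC h]
    exact sum_pow_length_mul_one_sub_le_one _ hr0 (by linarith)
  have hlog_q (a : A) : p a * log (q a) = p a * (C a).length * log r + p a * log c := by
    by_cases hpa : p a = 0
    · simp [hpa]
    · rw [log_mul (hsupp a hpa) hc.ne', log_pow]; ring
  calc -∑ a, p a * log (p a) ≤ -∑ a, p a * log (q a) :=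
        neg_sum_mul_log_le_neg_sum_mul_log hp0 (fun a => by positivity)
          (fun a hpa => mul_ne_zero (hsupp a hpa) hc.ne') hq1
    _ = _ := by simp only [hlog_q, sum_add_distrib, ← sum_mul, hp1]; ring

lemma neg_mul_log_div_le {L k : ℝ} (hL : 0 ≤ L) (hk : 0 < k) :
    -L * log (L / (k * (L + 1))) ≤ L * log k + 1 := by
  rcases hL.eq_or_lt with rfl | hL
  · simp
  have hlog : log ((L + 1) / L) ≤ (L + 1) / L - 1 := log_le_sub_one_of_pos (by positivity)
  rw [log_div (by positivity) hL.ne'] at hlog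
  have hmul : L * (log (L + 1) - log L) ≤ 1 := by
    calc L * (log (L + 1) - log L) ≤ L * ((L + 1) / L - 1) :=
          mul_le_mul_of_nonneg_left hlog hL.le
      _ = 1 := by field_simp; ring
  rw [log_div hL.ne' (by positivity), log_mul hk.ne' (by positivity)]
  linarith

lemma neg_sum_mul_log_le_mul_log_card_add_log [Nonempty α] (hp0 : ∀ a, 0 ≤ p a)
    (hp1 : ∑ a, p a = 1) (hC : Function.Injective C) :
    -∑ a, p a * log (p a)
      ≤ (∑ a, p a * (C a).length) * log (Fintype.card α) + 1
        + log ((∑ a, p a * (C a).length) + 1) := by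
  set L := ∑ a, p a * ((C a).length : ℝ)
  set k : ℝ := (Fintype.card α : ℝ)
  have hk : 0 < k := by simp only [k]; exact_mod_cast Fintype.card_pos
  have hterm (a : A) : 0 ≤ p a * (C a).length := mul_nonneg (hp0 a) (Nat.cast_nonneg _)
  have hL : 0 ≤ L := sum_nonneg fun a _ => hterm a
  -- `r = θ / k` with `θ = L / (L + 1)`; for `L = 0` this is `r = 0`, and every word of positive
  -- probability is empty.
  set r := L / (k * (L + 1))
  have hkr : 1 - k * r = (L + 1)⁻¹ := by simp only [r]; field_simp; ring
  have hsupp (a : A) (hpa : p a ≠ 0) : r ^ (C a).length ≠ 0 := by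
    rcases hL.eq_or_lt with hL0 | hL0
    · have hterm0 : p a * (C a).length = 0 :=
        (sum_eq_zero_iff_of_nonneg fun b _ => hterm b).1 hL0.symm a (mem_univ a)
      have hlen : (C a).length = 0 := by exact_mod_cast (mul_eq_zero.1 hterm0).resolve_left hpa
      simp [hlen]
    · positivity
  have hbound := neg_sum_mul_log_le_of_injective hp0 hp1 hC (by positivity)
    (by rw [← sub_pos, hkr]; positivity) hsupp
  rw [hkr, log_inv, sub_neg_eq_add] at hbound
  linarith [neg_mul_log_div_le hL hk]

end InjectiveCode

lemma sub_logb_le_of_le_add_logb {b H L : ℝ} (hb : 1 < b) (hH : 0 ≤ H) (hL : 0 ≤ L)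
    (h : H ≤ L + logb b (exp 1 * (L + 1))) : H - logb b (exp 1 * (H + 1)) ≤ L := by
  rcases le_or_gt H L with hHL | hLH
  · have : 0 ≤ logb b (exp 1 * (H + 1)) :=
      logb_nonneg hb (one_le_mul_of_one_le_of_one_le (one_le_exp zero_le_one) (by linarith))
    linarith
  · have : logb b (exp 1 * (L + 1)) ≤ logb b (exp 1 * (H + 1)) :=
      logb_le_logb_of_le hb (by positivity) (by gcongr)
    linarith

/-- For any injective compressor `C : A → {0,1}*` and any random variable `X`
on the finite set `A` with pmf `p`, the expected codeword length satisfies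
`E[ℓ(C(X))] ≥ H(X) - log(e(H(X)+1))` (entropy in bits). -/
theorem injective_compressor_lower_bound {A : Type*} [Fintype A]
    (p : A → ℝ) (hp0 : ∀ a, 0 ≤ p a) (hp1 : ∑ a, p a = 1)
    (C : A → List Bool) (hC : Function.Injective C) :
    (-∑ a, p a * Real.logb 2 (p a))
        - Real.logb 2 (Real.exp 1 * ((-∑ a, p a * Real.logb 2 (p a)) + 1))
      ≤ ∑ a, p a * ((C a).length : ℝ) := by
  set L := ∑ a, p a * ((C a).length : ℝ)
  have hlog2 : 0 < log 2 := log_pos one_lt_two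
  have hbits : -∑ a, p a * logb 2 (p a) = (-∑ a, p a * log (p a)) / log 2 := by
    simp only [logb, mul_div_assoc', ← sum_div, neg_div]
  have hentropy : 0 ≤ -∑ a, p a * log (p a) := by
    simp only [← sum_neg_distrib, ← neg_mul]
    exact sum_nonneg fun a _ => negMulLog_nonneg (hp0 a)
      (hp1 ▸ single_le_sum (fun b _ => hp0 b) (mem_univ a))
  have hL : 0 ≤ L := sum_nonneg fun a _ => mul_nonneg (hp0 a) (Nat.cast_nonneg _)
  have hnats := neg_sum_mul_log_le_mul_log_card_add_log hp0 hp1 hC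
  rw [Fintype.card_bool, Nat.cast_ofNat] at hnats
  refine sub_logb_le_of_le_add_logb one_lt_two (by rw [hbits]; exact div_nonneg hentropy hlog2.le)
    hL ?_
  rw [hbits, logb, log_mul (exp_ne_zero 1) (by positivity), log_exp, div_le_iff₀ hlog2,
    add_mul, div_mul_cancel₀ _ hlog2.ne']
  linarith
end
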